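/- At every point (x, y, θ) ∈ 𝕋 × ℝ × 𝕋 with κ, γ, σ > 0, the vector fields X̃₀, X̃₂, and iterated Lie brackets of X̃₂ with X̃₀ span ℝ³, i.e., the projective process of the randomly forced pendulum satisfies the weak Hörmander condition. Specifically: if θ ≠ π and x ∉ {0, π}, then X̃₂, [X̃₂,X̃₀], [[X̃₂,X̃₀],X̃₀] span ℝ³; if θ = π, then X̃₂, [X̃₂,X̃₀], X̃₀ span ℝ³; and if x ∈ {0,π} with θ ≠ π, then X̃₂, [X̃₂,X̃₀], [[[[X̃₂,X̃₀],X̃₀],X̃₀],X̃₂] span ℝ³. -/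

import Mathlib

/-!
`X̃₂ = (0, σ, 0)` and `[X̃₂, X̃₀] = (σ, -γσ, 0)` span the `(x, y)`-plane at every point, so in
each case it suffices that the third vector field has a nonzero `θ`-component there:
`κσ sin x (cos θ + 1)` for `[[X̃₂, X̃₀], X̃₀]`, `-2` for `X̃₀` on `θ = π`, and
`κσ² cos x (cos θ + 1)` for `[[[[X̃₂, X̃₀], X̃₀], X̃₀], X̃₂]`. On `𝕋`, `sin x` vanishes only at
`0, π` and `cos θ + 1` only at `π`.
-/

open Real

/-- Lie bracket of vector fields on ℝ³ (identified with ℝ × ℝ × ℝ):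
`[U, V](p) = DV(p) U(p) − DU(p) V(p)`. -/
noncomputable def lieBracket (U V : ℝ × ℝ × ℝ → ℝ × ℝ × ℝ) : ℝ × ℝ × ℝ → ℝ × ℝ × ℝ :=
  fun p => fderiv ℝ V p (U p) - fderiv ℝ U p (V p)

theorem lieBracket_const_left (c : ℝ × ℝ × ℝ) (V : ℝ × ℝ × ℝ → ℝ × ℝ × ℝ) (p : ℝ × ℝ × ℝ) :
    lieBracket (fun _ => c) V p = fderiv ℝ V p c := by
  simp [lieBracket]

theorem lieBracket_const_right (U : ℝ × ℝ × ℝ → ℝ × ℝ × ℝ) (c : ℝ × ℝ × ℝ) (p : ℝ × ℝ × ℝ) :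
    lieBracket U (fun _ => c) p = -fderiv ℝ U p c := by
  simp [lieBracket]

theorem Submodule.span_triangular_eq_top {K : Type*} [Field K] {s t u a b c : K}
    (hs : s ≠ 0) (ht : t ≠ 0) (hc : c ≠ 0) :
    Submodule.span K ({(0, s, 0), (t, u, 0), (a, b, c)} : Set (K × K × K)) = ⊤ := by
  refine eq_top_iff'.2 fun v => ?_
  set δ := v.2.2 / c
  set β := (v.1 - δ * a) / t
  set α := (v.2.1 - β * u - δ * b) / s
  have hv : v = α • (0, s, 0) + β • (t, u, 0) + δ • (a, b, c) := by
    ext <;> simp [α, β, δ] <;> field_simp <;> ring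
  rw [hv]
  exact add_mem (add_mem (smul_mem _ _ (subset_span (by simp)))
    (smul_mem _ _ (subset_span (by simp)))) (smul_mem _ _ (subset_span (by simp)))

theorem Real.sin_ne_zero_of_mem_Ico {x : ℝ} (hx : x ∈ Set.Ico 0 (2 * π)) (h₀ : x ≠ 0)
    (hπ : x ≠ π) : sin x ≠ 0 := by
  have hpos : 0 < x := lt_of_le_of_ne hx.1 (Ne.symm h₀)
  rw [← neg_ne_zero, ← sin_sub_pi]
  intro h
  exact hπ (sub_eq_zero.1 ((sin_eq_zero_iff_of_lt_of_lt (by linarith) (by linarith [hx.2])).1 h))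

theorem Real.cos_add_one_ne_zero_of_mem_Ico {θ : ℝ} (hθ : θ ∈ Set.Ico 0 (2 * π)) (hπ : θ ≠ π) :
    cos θ + 1 ≠ 0 := by
  intro h
  have h' : cos (θ - π) = 1 := by rw [cos_sub_pi]; linarith
  have := pi_pos
  exact hπ (sub_eq_zero.1 ((cos_eq_one_iff_of_lt_of_lt (by linarith [hθ.1])
    (by linarith [hθ.2])).1 h'))

namespace Pendulum

variable (κ γ σ : ℝ)

-- `drift = X̃₀`, `forcing = X̃₂`, and `bracketₖ` is the `k`-fold bracket `[⋯[X̃₂, X̃₀]⋯, X̃₀]`.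
noncomputable def drift (p : ℝ × ℝ × ℝ) : ℝ × ℝ × ℝ :=
  (p.2.1, -γ * p.2.1 - κ * sin p.1,
    -γ * sin p.2.2 + cos p.2.2 - κ * cos p.1 * (cos p.2.2 + 1) - 1)

def forcing : ℝ × ℝ × ℝ → ℝ × ℝ × ℝ := fun _ => (0, σ, 0)

def bracket₁ : ℝ × ℝ × ℝ → ℝ × ℝ × ℝ := fun _ => (σ, -γ * σ, 0)

noncomputable def bracket₂ (p : ℝ × ℝ × ℝ) : ℝ × ℝ × ℝ :=
  (-γ * σ, γ ^ 2 * σ - κ * σ * cos p.1, κ * σ * sin p.1 * (cos p.2.2 + 1))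

noncomputable def bracket₃ (p : ℝ × ℝ × ℝ) : ℝ × ℝ × ℝ :=
  (γ ^ 2 * σ - κ * σ * cos p.1, -γ ^ 3 * σ + 2 * γ * κ * σ * cos p.1 - κ * σ * p.2.1 * sin p.1,
    -κ * σ * (2 * sin p.1 * (γ * (cos p.2.2 + 1) + sin p.2.2) + p.2.1 * cos p.1 * (cos p.2.2 + 1)))

section Coordinates

variable (p : ℝ × ℝ × ℝ)

theorem hasFDerivAt_x :
    HasFDerivAt (fun q : ℝ × ℝ × ℝ => q.1) (ContinuousLinearMap.fst ℝ ℝ _) p :=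
  hasFDerivAt_fst

theorem hasFDerivAt_y :
    HasFDerivAt (fun q : ℝ × ℝ × ℝ => q.2.1)
      ((ContinuousLinearMap.fst ℝ ℝ ℝ).comp (ContinuousLinearMap.snd ℝ ℝ _)) p :=
  hasFDerivAt_snd.fst

theorem hasFDerivAt_θ :
    HasFDerivAt (fun q : ℝ × ℝ × ℝ => q.2.2)
      ((ContinuousLinearMap.snd ℝ ℝ ℝ).comp (ContinuousLinearMap.snd ℝ ℝ _)) p :=
  hasFDerivAt_snd.snd

end Coordinates

theorem fderiv_drift_apply (p v : ℝ × ℝ × ℝ) :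
    fderiv ℝ (drift κ γ) p v =
      (v.2.1, -γ * v.2.1 - κ * cos p.1 * v.1,
        κ * sin p.1 * (cos p.2.2 + 1) * v.1
          + (-γ * cos p.2.2 - sin p.2.2 + κ * cos p.1 * sin p.2.2) * v.2.2) := by
  have hx := hasFDerivAt_x p
  have hy := hasFDerivAt_y p
  have hθ := hasFDerivAt_θ p
  have h : HasFDerivAt (drift κ γ) _ p :=
    hy.prodMk (((hy.const_mul (-γ)).sub (hx.sin.const_mul κ)).prodMk
      ((((hθ.sin.const_mul (-γ)).add hθ.cos).sub
        ((hx.cos.const_mul κ).mul (hθ.cos.add_const 1))).sub_const 1))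
  rw [h.fderiv]
  ext <;> simp <;> ring

theorem fderiv_bracket₂_apply (p v : ℝ × ℝ × ℝ) :
    fderiv ℝ (bracket₂ κ γ σ) p v =
      (0, κ * σ * sin p.1 * v.1,
        κ * σ * cos p.1 * (cos p.2.2 + 1) * v.1 - κ * σ * sin p.1 * sin p.2.2 * v.2.2) := by
  have hx := hasFDerivAt_x p
  have hθ := hasFDerivAt_θ p
  have h : HasFDerivAt (bracket₂ κ γ σ) _ p :=
    (hasFDerivAt_const (-γ * σ) p).prodMk ((hx.cos.const_mul (κ * σ)).const_sub (γ ^ 2 * σ)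
      |>.prodMk ((hx.sin.const_mul (κ * σ)).mul (hθ.cos.add_const 1)))
  rw [h.fderiv]
  ext <;> simp <;> ring

theorem lieBracket_forcing_drift :
    lieBracket (forcing σ) (drift κ γ) = bracket₁ γ σ := by
  funext p
  unfold forcing
  rw [lieBracket_const_left, fderiv_drift_apply]
  simp [bracket₁]

theorem lieBracket_bracket₁_drift :
    lieBracket (bracket₁ γ σ) (drift κ γ) = bracket₂ κ γ σ := by
  funext p
  unfold bracket₁
  rw [lieBracket_const_left, fderiv_drift_apply, bracket₂]
  ext <;> simp <;> ring

theorem lieBracket_bracket₂_drift :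
    lieBracket (bracket₂ κ γ σ) (drift κ γ) = bracket₃ κ γ σ := by
  funext p
  rw [lieBracket, fderiv_drift_apply, fderiv_bracket₂_apply]
  simp only [bracket₂, bracket₃, drift, Prod.mk_sub_mk, Prod.mk.injEq]
  refine ⟨by ring, by ring, ?_⟩
  linear_combination (-γ * κ * σ * sin p.1) * sin_sq_add_cos_sq p.2.2

theorem lieBracket_bracket₃_forcing (p : ℝ × ℝ × ℝ) :
    lieBracket (bracket₃ κ γ σ) (forcing σ) p =
      (0, κ * σ ^ 2 * sin p.1, κ * σ ^ 2 * cos p.1 * (cos p.2.2 + 1)) := by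
  have hx := hasFDerivAt_x p
  have hy := hasFDerivAt_y p
  have hθ := hasFDerivAt_θ p
  have h : HasFDerivAt (bracket₃ κ γ σ) _ p :=
    ((hx.cos.const_mul (κ * σ)).const_sub (γ ^ 2 * σ)).prodMk
      ((((hx.cos.const_mul (2 * γ * κ * σ)).const_add (-γ ^ 3 * σ)).sub
        ((hy.const_mul (κ * σ)).mul hx.sin)).prodMk
      ((((hx.sin.const_mul 2).mul ((hθ.cos.add_const 1).const_mul γ |>.add hθ.sin)).add
        ((hy.mul hx.cos).mul (hθ.cos.add_const 1))).const_mul (-κ * σ)))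
  unfold forcing
  rw [lieBracket_const_right, h.fderiv]
  ext <;> simp <;> ring

end Pendulum

theorem stmt7_general (κ γ σ : ℝ) (hκ : 0 < κ) (hσ : 0 < σ)
    (X0 : ℝ × ℝ × ℝ → ℝ × ℝ × ℝ)
    (hX0 : X0 = fun p => (p.2.1, -γ * p.2.1 - κ * Real.sin p.1,
      -γ * Real.sin p.2.2 + Real.cos p.2.2 - κ * Real.cos p.1 * (Real.cos p.2.2 + 1) - 1))
    (X2 : ℝ × ℝ × ℝ → ℝ × ℝ × ℝ) (hX2 : X2 = fun _ => (0, σ, 0)) :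
    ∀ x y θ : ℝ, x ∈ Set.Ico 0 (2 * π) → θ ∈ Set.Ico 0 (2 * π) →
      ((θ ≠ π ∧ x ≠ 0 ∧ x ≠ π) →
        Submodule.span ℝ ({X2 (x, y, θ), lieBracket X2 X0 (x, y, θ),
          lieBracket (lieBracket X2 X0) X0 (x, y, θ)} : Set (ℝ × ℝ × ℝ)) = ⊤)
      ∧ (θ = π →
        Submodule.span ℝ ({X2 (x, y, θ), lieBracket X2 X0 (x, y, θ),
          X0 (x, y, θ)} : Set (ℝ × ℝ × ℝ)) = ⊤)
      ∧ ((x = 0 ∨ x = π) → θ ≠ π →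
        Submodule.span ℝ ({X2 (x, y, θ), lieBracket X2 X0 (x, y, θ),
          lieBracket (lieBracket (lieBracket (lieBracket X2 X0) X0) X0) X2 (x, y, θ)} :
            Set (ℝ × ℝ × ℝ)) = ⊤) := by
  obtain rfl : X0 = Pendulum.drift κ γ := hX0
  obtain rfl : X2 = Pendulum.forcing σ := hX2
  intro x y θ hx hθ
  rw [Pendulum.lieBracket_forcing_drift, Pendulum.lieBracket_bracket₁_drift,
    Pendulum.lieBracket_bracket₂_drift, Pendulum.lieBracket_bracket₃_forcing]
  refine ⟨fun ⟨hθπ, hx₀, hxπ⟩ => ?_, fun hθπ => ?_, fun hx₀π hθπ => ?_⟩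
  · refine Submodule.span_triangular_eq_top hσ.ne' hσ.ne' ?_
    have := sin_ne_zero_of_mem_Ico hx hx₀ hxπ
    have := cos_add_one_ne_zero_of_mem_Ico hθ hθπ
    positivity
  · subst hθπ
    exact Submodule.span_triangular_eq_top hσ.ne' hσ.ne' (by norm_num [Pendulum.drift])
  · refine Submodule.span_triangular_eq_top hσ.ne' hσ.ne' ?_
    have := cos_add_one_ne_zero_of_mem_Ico hθ hθπ
    have : cos x ≠ 0 := by rcases hx₀π with rfl | rfl <;> simp
    positivity

/-- The weak Hörmander condition for the projective process of the randomly forced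
pendulum, with the torus coordinates `x, θ` ranging over `[0, 2π)`. -/
theorem stmt7 (κ γ σ : ℝ) (hκ : 0 < κ) (hγ : 0 < γ) (hσ : 0 < σ)
    (X0 : ℝ × ℝ × ℝ → ℝ × ℝ × ℝ)
    (hX0 : X0 = fun p => (p.2.1, -γ * p.2.1 - κ * Real.sin p.1,
      -γ * Real.sin p.2.2 + Real.cos p.2.2 - κ * Real.cos p.1 * (Real.cos p.2.2 + 1) - 1))
    (X2 : ℝ × ℝ × ℝ → ℝ × ℝ × ℝ) (hX2 : X2 = fun _ => (0, σ, 0)) :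
    ∀ x y θ : ℝ, x ∈ Set.Ico 0 (2 * π) → θ ∈ Set.Ico 0 (2 * π) →
      ((θ ≠ π ∧ x ≠ 0 ∧ x ≠ π) →
        Submodule.span ℝ ({X2 (x, y, θ), lieBracket X2 X0 (x, y, θ),
          lieBracket (lieBracket X2 X0) X0 (x, y, θ)} : Set (ℝ × ℝ × ℝ)) = ⊤)
      ∧ (θ = π →
        Submodule.span ℝ ({X2 (x, y, θ), lieBracket X2 X0 (x, y, θ),
          X0 (x, y, θ)} : Set (ℝ × ℝ × ℝ)) = ⊤)
      ∧ ((x = 0 ∨ x = π) → θ ≠ π →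
        Submodule.span ℝ ({X2 (x, y, θ), lieBracket X2 X0 (x, y, θ),
          lieBracket (lieBracket (lieBracket (lieBracket X2 X0) X0) X0) X2 (x, y, θ)} :
            Set (ℝ × ℝ × ℝ)) = ⊤) :=
  stmt7_general κ γ σ hκ hσ X0 hX0 X2 hX2
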